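/- Let F be a field and let A be the 4×4 generalized Cartan matrix with rows (2,0,0,−1), (0,2,0,−1), (0,0,2,−1), (−2,−2,−2,2). Then K_2(A,F) is isomorphic to K_2(2,F) × (K_2(2,F)/⟨{u²,v}⟩) × (K_2(2,F)/⟨{u²,v}⟩). -/

import Mathlib

/-!
Common definitions: presentations of the abelian groups `K₂(F)`, `K₂(2,F)` and `K₂(A,F)`
(Rehmann–Morita).  "The abelian group generated by symbols subject to relations" is
formalized as the abelianization of the corresponding presented group.
-/

variable (F : Type) [Field F]

/-- Relators for `K₂(F)`: the Steinberg symbol relations (A1)-(A3).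
(A3) `{u, 1-u} = 1` (for `u ≠ 1`) is encoded as: for units `u, w` with `(w : F) = 1 - u`
(which forces `u ≠ 1`), `{u, w}` is a relator. -/
def K2Rels : Set (FreeGroup (Fˣ × Fˣ)) :=
  {r | (∃ t u v : Fˣ, r = FreeGroup.of (t * u, v) * (FreeGroup.of (t, v) * FreeGroup.of (u, v))⁻¹) ∨
       (∃ t u v : Fˣ, r = FreeGroup.of (t, u * v) * (FreeGroup.of (t, u) * FreeGroup.of (t, v))⁻¹) ∨
       (∃ u w : Fˣ, (w : F) = 1 - (u : F) ∧ r = FreeGroup.of (u, w))}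

/-- `K₂(F)`: the abelian group generated by the symbols `{u,v}`, `u v ∈ Fˣ`,
subject to the Steinberg symbol relations (A1)-(A3). -/
def K2 : Type := Abelianization (PresentedGroup (K2Rels F))

noncomputable instance : CommGroup (K2 F) := inferInstanceAs (CommGroup (Abelianization _))

/-- The Steinberg symbol `{u,v}` in `K₂(F)`. -/
def K2.sym (u v : Fˣ) : K2 F := Abelianization.of (PresentedGroup.of (u, v))

/-- The subgroup `m·K₂(F)` of `m`-th powers of elements of `K₂(F)`. -/
noncomputable def K2.powSubgroup (m : ℕ) : Subgroup (K2 F) := Subgroup.closure {x | ∃ y : K2 F, x = y ^ m}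

/-- Relators for `K₂(2,F)`: the Steinberg cocycle relations (B1)-(B4). -/
def K2SLRels : Set (FreeGroup (Fˣ × Fˣ)) :=
  {r | (∃ t u v : Fˣ, r = FreeGroup.of (t, u) * FreeGroup.of (t * u, v) *
          (FreeGroup.of (t, u * v) * FreeGroup.of (u, v))⁻¹) ∨
       (r = FreeGroup.of ((1 : Fˣ), (1 : Fˣ))) ∨
       (∃ u v : Fˣ, r = FreeGroup.of (u, v) * (FreeGroup.of (u⁻¹, v⁻¹))⁻¹) ∨
       (∃ u v w : Fˣ, (w : F) = 1 - (u : F) ∧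
          r = FreeGroup.of (u, v) * (FreeGroup.of (u, w * v))⁻¹)}

/-- `K₂(2,F)`: the abelian group generated by the symbols `{u,v}`, `u v ∈ Fˣ`,
subject to the Steinberg cocycle relations (B1)-(B4). -/
def K2SL : Type := Abelianization (PresentedGroup (K2SLRels F))

noncomputable instance : CommGroup (K2SL F) := inferInstanceAs (CommGroup (Abelianization _))

/-- The Steinberg cocycle `{u,v}` in `K₂(2,F)`. -/
def K2SL.sym (u v : Fˣ) : K2SL F := Abelianization.of (PresentedGroup.of (u, v))

/-- The subgroup `m⟨{u²,v}⟩` of `K₂(2,F)` generated by the elements `{u²,v}^m`, `u v ∈ Fˣ`. -/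
noncomputable def K2SL.sqSubgroup (m : ℤ) : Subgroup (K2SL F) :=
  Subgroup.closure {x | ∃ u v : Fˣ, x = (K2SL.sym F (u ^ 2) v) ^ m}

/-- A generalized Cartan matrix: `a_{ii} = 2`, off-diagonal entries `≤ 0`,
and `a_{ij} = 0 ↔ a_{ji} = 0`. -/
def IsGCM {n : ℕ} (A : Matrix (Fin n) (Fin n) ℤ) : Prop :=
  (∀ i, A i i = 2) ∧ (∀ i j, i ≠ j → A i j ≤ 0) ∧ (∀ i j, A i j = 0 ↔ A j i = 0)

/-- Relators for `K₂(A,F)`: the Rehmann–Morita relations (L1)-(L7). -/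
def K2ARels {n : ℕ} (A : Matrix (Fin n) (Fin n) ℤ) : Set (FreeGroup (Fin n × Fˣ × Fˣ)) :=
  {r | (∃ (i : Fin n) (t u v : Fˣ),
          r = FreeGroup.of (i, t, u) * FreeGroup.of (i, t * u, v) *
              (FreeGroup.of (i, t, u * v) * FreeGroup.of (i, u, v))⁻¹) ∨
       (∃ i : Fin n, r = FreeGroup.of (i, 1, 1)) ∨
       (∃ (i : Fin n) (u v : Fˣ),
          r = FreeGroup.of (i, u, v) * (FreeGroup.of (i, u⁻¹, v⁻¹))⁻¹) ∨
       (∃ (i : Fin n) (u v w : Fˣ), (w : F) = 1 - (u : F) ∧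
          r = FreeGroup.of (i, u, v) * (FreeGroup.of (i, u, w * v))⁻¹) ∨
       (∃ (i j : Fin n) (u v : Fˣ), i ≠ j ∧
          r = FreeGroup.of (i, u, v ^ (A j i)) * (FreeGroup.of (j, u ^ (A i j), v))⁻¹) ∨
       (∃ (i j : Fin n) (t u v : Fˣ), i ≠ j ∧
          r = FreeGroup.of (i, t * u, v ^ (A j i)) *
              (FreeGroup.of (i, t, v ^ (A j i)) * FreeGroup.of (i, u, v ^ (A j i)))⁻¹) ∨
       (∃ (i j : Fin n) (t u v : Fˣ), i ≠ j ∧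
          r = FreeGroup.of (i, t ^ (A j i), u * v) *
              (FreeGroup.of (i, t ^ (A j i), u) * FreeGroup.of (i, t ^ (A j i), v))⁻¹)}

/-- `K₂(A,F)`: the abelian group generated by the symbols `c_i(u,v)` subject to (L1)-(L7). -/
def K2A {n : ℕ} (A : Matrix (Fin n) (Fin n) ℤ) : Type :=
  Abelianization (PresentedGroup (K2ARels F A))

noncomputable instance {n : ℕ} (A : Matrix (Fin n) (Fin n) ℤ) : CommGroup (K2A F A) :=
  inferInstanceAs (CommGroup (Abelianization _))

/-- The generator `c_i(u,v)` of `K₂(A,F)`. -/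
def K2A.c {n : ℕ} (A : Matrix (Fin n) (Fin n) ℤ) (i : Fin n) (u v : Fˣ) : K2A F A :=
  Abelianization.of (PresentedGroup.of (i, u, v))

open scoped Classical in
/-- `LGroup F p` is `K₂(F)` when `p` holds and `K₂(2,F)` otherwise.  Taking
`p = "the i-th column of A has an odd entry"` gives the factor `L_i`. -/
noncomputable def LGroup (p : Prop) : Type :=
  Abelianization (PresentedGroup (if p then K2Rels F else K2SLRels F))

noncomputable instance (p : Prop) : CommGroup (LGroup F p) :=
  inferInstanceAs (CommGroup (Abelianization _))

/-- The symbol `{u,v}` (Steinberg symbol resp. cocycle) in `LGroup F p`. -/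
noncomputable def LGroup.sym (p : Prop) (u v : Fˣ) : LGroup F p :=
  Abelianization.of (PresentedGroup.of (u, v))

/-- Relators `x_i^{a_{ji}} = x_j^{a_{ij}}` (`i < j`) for the auxiliary abelian group `G`. -/
def GRels {n : ℕ} (A : Matrix (Fin n) (Fin n) ℤ) : Set (FreeGroup (Fin n)) :=
  {r | ∃ i j : Fin n, i < j ∧ r = FreeGroup.of i ^ (A j i) * (FreeGroup.of j ^ (A i j))⁻¹}

/-- The abelian group `G = ⟨x_1,…,x_n ∣ x_i^{a_{ji}} = x_j^{a_{ij}}, [x_i,x_j] = 1⟩`. -/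
def GGroup {n : ℕ} (A : Matrix (Fin n) (Fin n) ℤ) : Type :=
  Abelianization (PresentedGroup (GRels A))

noncomputable instance {n : ℕ} (A : Matrix (Fin n) (Fin n) ℤ) : CommGroup (GGroup A) :=
  inferInstanceAs (CommGroup (Abelianization _))

/-!
Each `c_i` is a Steinberg cocycle, and relation (L5) between a leaf `k ∈ {0, 1, 2}` and the
centre `3` of the Dynkin diagram reads `c_k(u², v) = c_3(u, v)`. So `c_3` is determined by `c_0`,
and for the other leaves `c_k / c_0` is a Steinberg cocycle killing every `{u², v}`; this gives
`K₂(2,F) × Q × Q → K₂(A,F)` with `Q = K₂(2,F)/⟨{u²,v}⟩`. The inverse sends `c_k(u, v)` to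
`{u, v}` in the first factor and to the class of `{u, v}` in the factor of `k` (`k = 1, 2`), and
`c_3(u, v)` to `({u, v²}, 1, 1)`.

That this respects (L1)–(L7) rests on two facts about an arbitrary Steinberg cocycle `c`:
`c(u², v) = c(u, v²)`, and `(x, y) ↦ c(x, y²)` is bimultiplicative. Both come from the defect
`c(a, be) - c(a, b) - c(a, e)`, which is symmetric in `a, b, e` and vanishes as soon as one
argument is a square.
-/

section Defect

variable {α M : Type} [AddCommGroup M]

def rightDefect [Mul α] (f : α → α → M) (a b e : α) : M := f a (b * e) - f a b - f a e

def diagDefect [Mul α] (c : α → α → M) (x y : α) : M := c (x * y) (x * y) - c x x - c y y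

theorem rightDefect_comm [CommMagma α] (f : α → α → M) (a b e : α) :
    rightDefect f a b e = rightDefect f a e b := by
  unfold rightDefect
  rw [mul_comm b e]
  abel

theorem rightDefect_cocycle [Semigroup α] (f : α → α → M) (a b e g : α) :
    rightDefect f a b e + rightDefect f a (b * e) g =
      rightDefect f a b (e * g) + rightDefect f a e g := by
  unfold rightDefect
  rw [mul_assoc]
  abel

theorem diagDefect_comm [CommMagma α] (c : α → α → M) (x y : α) :
    diagDefect c x y = diagDefect c y x := by
  unfold diagDefect
  rw [mul_comm x y]
  abel

theorem rightDefect_diagDefect [CommSemigroup α] (c : α → α → M) (a b e : α) :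
    rightDefect (diagDefect c) a b e = c (a * b * e) (a * b * e) + c a a + c b b + c e e
      - c (a * b) (a * b) - c (a * e) (a * e) - c (b * e) (b * e) := by
  unfold rightDefect diagDefect
  rw [mul_assoc]
  abel

theorem rightDefect_diagDefect_comm [CommSemigroup α] (c : α → α → M) (a b e : α) :
    rightDefect (diagDefect c) a b e = rightDefect (diagDefect c) b a e := by
  rw [rightDefect_diagDefect, rightDefect_diagDefect, mul_comm b a, mul_comm b e, mul_comm a e]
  abel

end Defect

variable {F}

structure IsAddSteinbergCocycle {M : Type} [AddCommGroup M] (c : Fˣ → Fˣ → M) : Prop where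
  cocycle : ∀ t u v, c t u + c (t * u) v = c t (u * v) + c u v
  one_one : c 1 1 = 0
  eq_inv_inv : ∀ u v, c u v = c u⁻¹ v⁻¹
  eq_one_sub_mul : ∀ u v w : Fˣ, (w : F) = 1 - u → c u v = c u (w * v)

namespace IsAddSteinbergCocycle

variable {M : Type} [AddCommGroup M] {c : Fˣ → Fˣ → M}

theorem one_left (hc : IsAddSteinbergCocycle c) (v : Fˣ) : c 1 v = 0 := by
  have h := hc.cocycle 1 1 v
  rw [one_mul, one_mul] at h
  linear_combination (norm := abel) hc.one_one - h

theorem one_right (hc : IsAddSteinbergCocycle c) (t : Fˣ) : c t 1 = 0 := by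
  have h := hc.cocycle t 1 1
  rw [mul_one, mul_one] at h
  linear_combination (norm := abel) h + hc.one_one

-- Apply (B4) to `u` and, through (B3), to `u⁻¹`; the two factors combine to
-- `(1 - u) / (1 - u⁻¹) = -u`.
theorem neg_mul_right (hc : IsAddSteinbergCocycle c) (u v : Fˣ) : c u (-u * v) = c u v := by
  rcases eq_or_ne u 1 with rfl | hu
  · rw [hc.one_left, hc.one_left]
  have h₁ : 1 - (u : F) ≠ 0 := sub_ne_zero.2 (Ne.symm (Units.val_eq_one.not.2 hu))
  have h₂ : 1 - ((u⁻¹ : Fˣ) : F) ≠ 0 :=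
    sub_ne_zero.2 (Ne.symm (Units.val_eq_one.not.2 (inv_ne_one.2 hu)))
  set w₁ := Units.mk0 _ h₁
  set w₂ := Units.mk0 _ h₂
  have hw : w₂⁻¹ * w₁ = -u := by
    have h₃ : (u : F) - 1 ≠ 0 := sub_ne_zero.2 (Units.val_eq_one.not.2 hu)
    ext
    simp only [w₁, w₂, Units.val_mul, Units.val_inv_eq_inv_val, Units.val_mk0, Units.val_neg]
    field_simp
    ring
  have hw₂ : ∀ x, c u x = c u (w₂⁻¹ * x) := fun x => by
    rw [hc.eq_inv_inv u x, hc.eq_one_sub_mul u⁻¹ x⁻¹ w₂ rfl, hc.eq_inv_inv u⁻¹, inv_inv,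
      mul_inv, inv_inv, mul_comm]
  calc c u (-u * v) = c u (w₂⁻¹ * (w₁ * v)) := by rw [← mul_assoc, hw]
    _ = c u (w₁ * v) := (hw₂ _).symm
    _ = c u v := (hc.eq_one_sub_mul u v w₁ rfl).symm

theorem mul_self_right (hc : IsAddSteinbergCocycle c) (u v : Fˣ) : c u (u * v) = c u (-v) := by
  rw [← hc.neg_mul_right u (-v), neg_mul_neg]

theorem neg_one_right (hc : IsAddSteinbergCocycle c) (u : Fˣ) : c u (-1) = c u u := by
  rw [← hc.neg_mul_right u (-1), neg_mul_neg, mul_one]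

theorem neg_right (hc : IsAddSteinbergCocycle c) (u v : Fˣ) :
    c u (-v) = c u v + c (u * v) (u * v) - c v v := by
  have h := hc.cocycle u v (-1)
  rw [hc.neg_one_right, hc.neg_one_right, mul_neg_one] at h
  linear_combination (norm := abel) -h

theorem rightDefect_eq (hc : IsAddSteinbergCocycle c) (a b e : Fˣ) :
    rightDefect c a b e = c (a * b) e - c b e - c a e := by
  have h := hc.cocycle a b e
  unfold rightDefect
  linear_combination (norm := abel) -h

theorem rightDefect_swap (hc : IsAddSteinbergCocycle c) (a b e : Fˣ) :
    rightDefect c a b e = rightDefect c b a e := by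
  rw [hc.rightDefect_eq, hc.rightDefect_eq, mul_comm a b]
  abel

theorem rightDefect_rotate (hc : IsAddSteinbergCocycle c) (a b e : Fˣ) :
    rightDefect c a b e = rightDefect c e a b := by
  rw [rightDefect_comm c a b e, hc.rightDefect_swap a e b]

theorem rightDefect_self_left (hc : IsAddSteinbergCocycle c) (v u : Fˣ) :
    rightDefect c v v u = diagDefect c v u := by
  unfold rightDefect diagDefect
  rw [hc.mul_self_right, hc.neg_right]
  abel

theorem rightDefect_self_right (hc : IsAddSteinbergCocycle c) (a y : Fˣ) :
    rightDefect c a y y = diagDefect c a y := by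
  rw [hc.rightDefect_swap, rightDefect_comm, hc.rightDefect_self_left, diagDefect_comm]

theorem sq_right (hc : IsAddSteinbergCocycle c) (a y : Fˣ) :
    c a (y ^ 2) = c a y + c a y + diagDefect c a y := by
  have h := hc.rightDefect_self_right a y
  unfold rightDefect at h
  rw [← sq] at h
  linear_combination (norm := abel) h

theorem sq_left (hc : IsAddSteinbergCocycle c) (u v : Fˣ) : c (u ^ 2) v = c u (v ^ 2) := by
  have h := hc.rightDefect_self_left u v
  rw [hc.rightDefect_eq, ← sq] at h
  rw [hc.sq_right]
  linear_combination (norm := abel) h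

theorem rightDefect_sq_left (hc : IsAddSteinbergCocycle c) (x u v : Fˣ) :
    rightDefect c (x ^ 2) u v = rightDefect c x (u ^ 2) (v ^ 2) := by
  unfold rightDefect
  rw [hc.sq_left, hc.sq_left, hc.sq_left, mul_pow]

theorem rightDefect_sq_sq (hc : IsAddSteinbergCocycle c) (a x y : Fˣ) :
    rightDefect c a (x ^ 2) (y ^ 2) = rightDefect c a x y + rightDefect c a x y +
      diagDefect c a (x * y) - diagDefect c a x - diagDefect c a y := by
  have h₁ := rightDefect_cocycle c a x x y
  have h₂ := rightDefect_cocycle c a (x * y) x y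
  have h₃ := rightDefect_cocycle c a (x * x) y y
  rw [hc.rightDefect_self_right a x, ← sq] at h₁
  rw [mul_right_comm x y x, ← sq, hc.rightDefect_self_right a (x * y),
    rightDefect_comm c a (x * y) x] at h₂
  rw [hc.rightDefect_self_right a y, ← sq, ← sq] at h₃
  linear_combination (norm := abel) h₁ + h₂ - h₃

theorem rightDefect_neg_one (hc : IsAddSteinbergCocycle c) (x y : Fˣ) :
    rightDefect c x y (-1) = diagDefect c x y := by
  unfold rightDefect diagDefect
  rw [mul_neg_one, hc.neg_right, hc.neg_one_right]
  abel

theorem diag_sq (hc : IsAddSteinbergCocycle c) (y : Fˣ) : c (y ^ 2) (y ^ 2) = 0 := by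
  rw [← hc.neg_one_right, hc.sq_left, neg_one_sq, hc.one_right]

theorem diagDefect_sq_right (hc : IsAddSteinbergCocycle c) (x y : Fˣ) :
    diagDefect c x (y ^ 2) = 0 := by
  rw [← hc.rightDefect_neg_one, hc.rightDefect_swap, hc.rightDefect_sq_left, neg_one_sq]
  unfold rightDefect
  rw [mul_one, hc.one_right]
  abel

theorem diag_mul_sq (hc : IsAddSteinbergCocycle c) (x y : Fˣ) :
    c (x * y ^ 2) (x * y ^ 2) = c x x := by
  have h := hc.diagDefect_sq_right x y
  unfold diagDefect at h
  rw [hc.diag_sq] at h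
  linear_combination (norm := abel) h

theorem rightDefect_sq_right (hc : IsAddSteinbergCocycle c) (x y z : Fˣ) :
    rightDefect c x y (z ^ 2) =
      rightDefect c x y z + rightDefect c x y z + rightDefect (diagDefect c) z x y := by
  rw [hc.rightDefect_rotate x y (z ^ 2), hc.rightDefect_sq_left, hc.rightDefect_sq_sq,
    ← hc.rightDefect_rotate x y z]
  unfold rightDefect
  abel

theorem rightDefect_diagDefect_sq (hc : IsAddSteinbergCocycle c) (a b e : Fˣ) :
    rightDefect (diagDefect c) a (b ^ 2) e = 0 := by
  rw [rightDefect_diagDefect, mul_right_comm a, hc.diag_mul_sq, hc.diag_mul_sq, hc.diag_sq,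
    mul_comm (b ^ 2), hc.diag_mul_sq]
  abel

-- `X := rightDefect c a (b²) (e²)` is symmetric in `a, b` by `rightDefect_sq_sq`, while
-- `rightDefect_sq_right` and `rightDefect_sq_left` give `X = 2 · rightDefect c b (a²) (e²) = 2X`.
theorem rightDefect_sq_sq_eq_zero (hc : IsAddSteinbergCocycle c) (a b e : Fˣ) :
    rightDefect c a (b ^ 2) (e ^ 2) = 0 := by
  have hP := rightDefect_diagDefect_comm c a b e
  unfold rightDefect at hP
  have hsymm : rightDefect c a (b ^ 2) (e ^ 2) = rightDefect c b (a ^ 2) (e ^ 2) := by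
    rw [hc.rightDefect_sq_sq, hc.rightDefect_sq_sq, hc.rightDefect_swap b a e]
    linear_combination (norm := abel) hP
  have hdouble : rightDefect c a (b ^ 2) (e ^ 2) =
      rightDefect c a (b ^ 2) e + rightDefect c a (b ^ 2) e := by
    rw [hc.rightDefect_sq_right, rightDefect_comm (diagDefect c) e a, hc.rightDefect_diagDefect_sq,
      add_zero]
  have hmove : rightDefect c a (b ^ 2) e = rightDefect c b (a ^ 2) (e ^ 2) := by
    rw [hc.rightDefect_swap, hc.rightDefect_sq_left]
  rw [hmove, ← hsymm] at hdouble
  linear_combination (norm := abel) -hdouble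

theorem rightDefect_sq_eq_zero (hc : IsAddSteinbergCocycle c) (x y z : Fˣ) :
    rightDefect c x y (z ^ 2) = 0 := by
  have hP : rightDefect (diagDefect c) z x y = rightDefect (diagDefect c) x y z := by
    rw [rightDefect_diagDefect_comm, rightDefect_comm]
  have h := hc.rightDefect_sq_sq x y z
  rw [hc.rightDefect_sq_sq_eq_zero] at h
  rw [hc.rightDefect_sq_right, hP]
  unfold rightDefect at h ⊢
  linear_combination (norm := abel) -h

theorem add_left_sq (hc : IsAddSteinbergCocycle c) (x y z : Fˣ) :
    c (x * y) (z ^ 2) = c x (z ^ 2) + c y (z ^ 2) := by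
  have h := hc.rightDefect_sq_eq_zero x y z
  rw [hc.rightDefect_eq] at h
  linear_combination (norm := abel) h

theorem add_right_sq (hc : IsAddSteinbergCocycle c) (x y z : Fˣ) :
    c x ((y * z) ^ 2) = c x (y ^ 2) + c x (z ^ 2) := by
  have h := hc.rightDefect_sq_sq_eq_zero x y z
  unfold rightDefect at h
  rw [mul_pow]
  linear_combination (norm := abel) h

end IsAddSteinbergCocycle

structure IsSteinbergCocycle {G : Type} [CommGroup G] (g : Fˣ → Fˣ → G) : Prop where
  cocycle : ∀ t u v, g t u * g (t * u) v = g t (u * v) * g u v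
  one_one : g 1 1 = 1
  eq_inv_inv : ∀ u v, g u v = g u⁻¹ v⁻¹
  eq_one_sub_mul : ∀ u v w : Fˣ, (w : F) = 1 - u → g u v = g u (w * v)

namespace IsSteinbergCocycle

variable {G H : Type} [CommGroup G] [CommGroup H] {g : Fˣ → Fˣ → G}

theorem toAdditive (hg : IsSteinbergCocycle g) :
    IsAddSteinbergCocycle (fun u v => Additive.ofMul (g u v)) where
  cocycle t u v := congrArg Additive.ofMul (hg.cocycle t u v)
  one_one := congrArg Additive.ofMul hg.one_one
  eq_inv_inv u v := congrArg Additive.ofMul (hg.eq_inv_inv u v)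
  eq_one_sub_mul u v w hw := congrArg Additive.ofMul (hg.eq_one_sub_mul u v w hw)

theorem one_left (hg : IsSteinbergCocycle g) (v : Fˣ) : g 1 v = 1 :=
  hg.toAdditive.one_left v

theorem one_right (hg : IsSteinbergCocycle g) (t : Fˣ) : g t 1 = 1 :=
  hg.toAdditive.one_right t

theorem sq_left (hg : IsSteinbergCocycle g) (u v : Fˣ) : g (u ^ 2) v = g u (v ^ 2) :=
  hg.toAdditive.sq_left u v

theorem mul_left_sq (hg : IsSteinbergCocycle g) (x y z : Fˣ) :
    g (x * y) (z ^ 2) = g x (z ^ 2) * g y (z ^ 2) :=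
  hg.toAdditive.add_left_sq x y z

theorem mul_right_sq (hg : IsSteinbergCocycle g) (x y z : Fˣ) :
    g x ((y * z) ^ 2) = g x (y ^ 2) * g x (z ^ 2) :=
  hg.toAdditive.add_right_sq x y z

theorem one_sub_mul_sq (hg : IsSteinbergCocycle g) {u w : Fˣ} (hw : (w : F) = 1 - u) (v : Fˣ) :
    g u ((w * v) ^ 2) = g u (v ^ 2) := by
  have hw₁ : g u w = 1 := by simpa [hg.one_right] using (hg.eq_one_sub_mul u 1 w hw).symm
  rw [hg.mul_right_sq, sq w, ← hg.eq_one_sub_mul u w w hw, hw₁, one_mul]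

theorem div {g₁ g₂ : Fˣ → Fˣ → G} (h₁ : IsSteinbergCocycle g₁) (h₂ : IsSteinbergCocycle g₂) :
    IsSteinbergCocycle (fun u v => g₁ u v / g₂ u v) where
  cocycle t u v := by
    simp only [div_mul_div_comm, h₁.cocycle, h₂.cocycle]
  one_one := by simp only [h₁.one_one, h₂.one_one, div_one]
  eq_inv_inv u v := by rw [← h₁.eq_inv_inv, ← h₂.eq_inv_inv]
  eq_one_sub_mul u v w hw := by rw [← h₁.eq_one_sub_mul u v w hw, ← h₂.eq_one_sub_mul u v w hw]

theorem map (hg : IsSteinbergCocycle g) (f : G →* H) :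
    IsSteinbergCocycle (fun u v => f (g u v)) where
  cocycle t u v := by simp only [← map_mul, hg.cocycle]
  one_one := by rw [hg.one_one, map_one]
  eq_inv_inv u v := by rw [← hg.eq_inv_inv]
  eq_one_sub_mul u v w hw := by rw [← hg.eq_one_sub_mul u v w hw]

protected theorem one : IsSteinbergCocycle (1 : Fˣ → Fˣ → G) where
  cocycle _ _ _ := rfl
  one_one := rfl
  eq_inv_inv _ _ := rfl
  eq_one_sub_mul _ _ _ _ := rfl

theorem comp_sq_right (hg : IsSteinbergCocycle g) :
    IsSteinbergCocycle (fun u v => g u (v ^ 2)) where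
  cocycle t u v := by rw [hg.mul_left_sq, hg.mul_right_sq, mul_assoc]
  one_one := by rw [one_pow, hg.one_one]
  eq_inv_inv u v := by rw [inv_pow, ← hg.eq_inv_inv]
  eq_one_sub_mul u v w hw := (hg.one_sub_mul_sq hw v).symm

end IsSteinbergCocycle

namespace K2SL

variable (F) in
theorem isSteinbergCocycle_sym : IsSteinbergCocycle (K2SL.sym F) where
  cocycle t u v := congrArg Abelianization.of
    (PresentedGroup.mk_eq_mk_of_mul_inv_mem (Or.inl ⟨t, u, v, rfl⟩))
  one_one := congrArg Abelianization.of (PresentedGroup.one_of_mem (Or.inr (Or.inl rfl)))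
  eq_inv_inv u v := congrArg Abelianization.of
    (PresentedGroup.mk_eq_mk_of_mul_inv_mem (Or.inr (Or.inr (Or.inl ⟨u, v, rfl⟩))))
  eq_one_sub_mul u v w hw := congrArg Abelianization.of
    (PresentedGroup.mk_eq_mk_of_mul_inv_mem (Or.inr (Or.inr (Or.inr ⟨u, v, w, hw, rfl⟩))))

theorem sym_sq_left_mem (u v : Fˣ) : sym F (u ^ 2) v ∈ sqSubgroup F 1 :=
  Subgroup.subset_closure ⟨u, v, (zpow_one _).symm⟩

variable (F) in
theorem isSteinbergCocycle_mk_sym :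
    IsSteinbergCocycle (fun u v => (sym F u v : K2SL F ⧸ sqSubgroup F 1)) :=
  (isSteinbergCocycle_sym F).map (QuotientGroup.mk' (sqSubgroup F 1))

theorem mk_sym_sq_left (u v : Fˣ) : (sym F (u ^ 2) v : K2SL F ⧸ sqSubgroup F 1) = 1 :=
  (QuotientGroup.eq_one_iff _).2 (sym_sq_left_mem u v)

variable {G : Type} [CommGroup G] {g : Fˣ → Fˣ → G}

theorem lift_rels (hg : IsSteinbergCocycle g) :
    ∀ r ∈ K2SLRels F, FreeGroup.lift (fun p : Fˣ × Fˣ => g p.1 p.2) r = 1 := by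
  rintro r (⟨t, u, v, rfl⟩ | rfl | ⟨u, v, rfl⟩ | ⟨u, v, w, hw, rfl⟩) <;>
    simp only [map_mul, map_inv, FreeGroup.lift_apply_of, mul_inv_eq_one]
  · exact hg.cocycle t u v
  · exact hg.one_one
  · exact hg.eq_inv_inv u v
  · exact hg.eq_one_sub_mul u v w hw

noncomputable def lift (hg : IsSteinbergCocycle g) : K2SL F →* G :=
  Abelianization.lift (PresentedGroup.toGroup (lift_rels hg))

@[simp]
theorem lift_sym (hg : IsSteinbergCocycle g) (u v : Fˣ) : lift hg (sym F u v) = g u v :=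
  (Abelianization.lift_apply_of _ _).trans (PresentedGroup.toGroup.of _)

theorem hom_ext {f f' : K2SL F →* G} (h : ∀ u v, f (sym F u v) = f' (sym F u v)) : f = f' :=
  Abelianization.hom_ext _ _ (PresentedGroup.ext fun p => h p.1 p.2)

noncomputable def liftSq (hg : IsSteinbergCocycle g) (hsq : ∀ u v, g (u ^ 2) v = 1) :
    K2SL F ⧸ sqSubgroup F 1 →* G :=
  QuotientGroup.lift _ (lift hg) <| (Subgroup.closure_le _).2 <| by
    rintro _ ⟨u, v, rfl⟩
    rw [SetLike.mem_coe, MonoidHom.mem_ker, zpow_one, lift_sym, hsq]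

@[simp]
theorem liftSq_mk_sym (hg : IsSteinbergCocycle g) (hsq : ∀ u v, g (u ^ 2) v = 1) (u v : Fˣ) :
    liftSq hg hsq (sym F u v) = g u v :=
  lift_sym hg u v

end K2SL

namespace K2A

variable {n : ℕ} (A : Matrix (Fin n) (Fin n) ℤ)

theorem isSteinbergCocycle_c (i : Fin n) : IsSteinbergCocycle (K2A.c F A i) where
  cocycle t u v := congrArg Abelianization.of
    (PresentedGroup.mk_eq_mk_of_mul_inv_mem (Or.inl ⟨i, t, u, v, rfl⟩))
  one_one := congrArg Abelianization.of (PresentedGroup.one_of_mem (Or.inr (Or.inl ⟨i, rfl⟩)))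
  eq_inv_inv u v := congrArg Abelianization.of
    (PresentedGroup.mk_eq_mk_of_mul_inv_mem (Or.inr (Or.inr (Or.inl ⟨i, u, v, rfl⟩))))
  eq_one_sub_mul u v w hw := congrArg Abelianization.of <| PresentedGroup.mk_eq_mk_of_mul_inv_mem
    (Or.inr (Or.inr (Or.inr (Or.inl ⟨i, u, v, w, hw, rfl⟩))))

theorem c_zpow_right {i j : Fin n} (hij : i ≠ j) (u v : Fˣ) :
    K2A.c F A i u (v ^ A j i) = K2A.c F A j (u ^ A i j) v :=
  congrArg Abelianization.of (PresentedGroup.mk_eq_mk_of_mul_inv_mem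
    (Or.inr (Or.inr (Or.inr (Or.inr (Or.inl ⟨i, j, u, v, hij, rfl⟩))))))

structure IsCocycleFamily {G : Type} [CommGroup G] (g : Fin n → Fˣ → Fˣ → G) : Prop where
  isSteinbergCocycle : ∀ i, IsSteinbergCocycle (g i)
  zpow_right : ∀ i j, i ≠ j → ∀ u v, g i u (v ^ A j i) = g j (u ^ A i j) v
  mul_left : ∀ i j, i ≠ j → ∀ t u v,
    g i (t * u) (v ^ A j i) = g i t (v ^ A j i) * g i u (v ^ A j i)
  mul_right : ∀ i j, i ≠ j → ∀ t u v,
    g i (t ^ A j i) (u * v) = g i (t ^ A j i) u * g i (t ^ A j i) v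

variable {A} {G : Type} [CommGroup G] {g : Fin n → Fˣ → Fˣ → G}

theorem lift_rels (hg : IsCocycleFamily A g) :
    ∀ r ∈ K2ARels F A, FreeGroup.lift (fun p : Fin n × Fˣ × Fˣ => g p.1 p.2.1 p.2.2) r = 1 := by
  rintro r (⟨i, t, u, v, rfl⟩ | ⟨i, rfl⟩ | ⟨i, u, v, rfl⟩ | ⟨i, u, v, w, hw, rfl⟩ |
    ⟨i, j, u, v, hij, rfl⟩ | ⟨i, j, t, u, v, hij, rfl⟩ | ⟨i, j, t, u, v, hij, rfl⟩) <;>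
      simp only [map_mul, map_inv, FreeGroup.lift_apply_of, mul_inv_eq_one]
  · exact (hg.isSteinbergCocycle i).cocycle t u v
  · exact (hg.isSteinbergCocycle i).one_one
  · exact (hg.isSteinbergCocycle i).eq_inv_inv u v
  · exact (hg.isSteinbergCocycle i).eq_one_sub_mul u v w hw
  · exact hg.zpow_right i j hij u v
  · exact hg.mul_left i j hij t u v
  · exact hg.mul_right i j hij t u v

noncomputable def lift (hg : IsCocycleFamily A g) : K2A F A →* G :=
  Abelianization.lift (PresentedGroup.toGroup (lift_rels hg))

@[simp]
theorem lift_c (hg : IsCocycleFamily A g) (i : Fin n) (u v : Fˣ) :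
    lift hg (K2A.c F A i u v) = g i u v :=
  (Abelianization.lift_apply_of _ _).trans (PresentedGroup.toGroup.of _)

theorem hom_ext {f f' : K2A F A →* G} (h : ∀ i u v, f (K2A.c F A i u v) = f' (K2A.c F A i u v)) :
    f = f' :=
  Abelianization.hom_ext _ _ (PresentedGroup.ext fun p => h p.1 p.2.1 p.2.2)

end K2A

structure IsStarCartan {n : ℕ} (A : Matrix (Fin n) (Fin n) ℤ) (m : Fin n) : Prop where
  center_row : ∀ k, k ≠ m → A m k = -2
  center_col : ∀ k, k ≠ m → A k m = -1
  eq_zero : ∀ i j, i ≠ j → i ≠ m → j ≠ m → A i j = 0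

namespace IsStarCartan

variable {n : ℕ} {A : Matrix (Fin n) (Fin n) ℤ} {m : Fin n}

theorem cases (hA : IsStarCartan A m) {i j : Fin n} (hij : i ≠ j) :
    (i = m ∧ A j i = -1 ∧ A i j = -2) ∨ (j = m ∧ A j i = -2 ∧ A i j = -1) ∨
      (A j i = 0 ∧ A i j = 0) := by
  rcases eq_or_ne i m with rfl | hi
  · exact .inl ⟨rfl, hA.center_col j hij.symm, hA.center_row j hij.symm⟩
  rcases eq_or_ne j m with rfl | hj
  · exact .inr (.inl ⟨rfl, hA.center_row i hi, hA.center_col i hi⟩)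
  · exact .inr (.inr ⟨hA.eq_zero j i hij.symm hj hi, hA.eq_zero i j hij hi hj⟩)

theorem even (hA : IsStarCartan A m) {k : Fin n} (hk : k ≠ m) : ∀ j, j ≠ k → Even (A j k) := by
  intro j hjk
  rcases hA.cases hjk.symm with ⟨rfl, -, -⟩ | ⟨rfl, h, -⟩ | ⟨h, -⟩
  · exact absurd rfl hk
  · exact h ▸ ⟨-1, rfl⟩
  · exact h ▸ ⟨0, rfl⟩

end IsStarCartan

section Families

variable {n : ℕ} {A : Matrix (Fin n) (Fin n) ℤ} {G : Type} {c : Fˣ → Fˣ → G}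

def starFamily (m : Fin n) (c : Fˣ → Fˣ → G) : Fin n → Fˣ → Fˣ → G :=
  Function.update (fun _ => c) m (fun u v => c u (v ^ 2))

@[simp]
theorem starFamily_self (m : Fin n) (u v : Fˣ) : starFamily m c m u v = c u (v ^ 2) := by
  simp [starFamily]

@[simp]
theorem starFamily_of_ne {m i : Fin n} (hi : i ≠ m) : starFamily m c i = c := by
  simp [starFamily, hi]

theorem isCocycleFamily_starFamily [CommGroup G] {m : Fin n} (hA : IsStarCartan A m)
    (hc : IsSteinbergCocycle c) : K2A.IsCocycleFamily A (starFamily m c) := by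
  have hfam : ∀ i, IsSteinbergCocycle (starFamily m c i) := fun i => by
    rcases eq_or_ne i m with rfl | hi
    · simpa [starFamily] using hc.comp_sq_right
    · simpa [hi] using hc
  have hinv : ∀ u v, c u (v⁻¹ ^ 2) = c u⁻¹ (v ^ 2) := fun u v => by
    rw [hc.eq_inv_inv, inv_pow, inv_inv]
  refine ⟨hfam, fun i j hij u v => ?_, fun i j hij t u v => ?_, fun i j hij t u v => ?_⟩ <;>
    rcases hA.cases hij with ⟨rfl, h₁, h₂⟩ | ⟨rfl, h₁, h₂⟩ | ⟨h₁, h₂⟩ <;>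
    simp only [h₁, h₂, zpow_neg, zpow_ofNat, pow_one, pow_zero, ← inv_pow,
      (hfam _).one_left, (hfam _).one_right, mul_one, starFamily_self, starFamily_of_ne hij,
      starFamily_of_ne hij.symm, hc.sq_left, hc.mul_left_sq, hc.mul_right_sq, hinv]

theorem isCocycleFamily_mulSingle [CommGroup G] {k : Fin n} (hk : ∀ j, j ≠ k → Even (A j k))
    (hc : IsSteinbergCocycle c) (hsq : ∀ u v, c (u ^ 2) v = 1) :
    K2A.IsCocycleFamily A (Pi.mulSingle k c) := by
  have hsq' : ∀ j, j ≠ k → ∀ u v, c (u ^ A j k) v = 1 ∧ c u (v ^ A j k) = 1 := fun j hj u v => by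
    obtain ⟨l, hl⟩ := hk j hj
    rw [hl, zpow_add, zpow_add, ← sq, ← sq, ← hc.sq_left]
    exact ⟨hsq _ _, hsq _ _⟩
  have hfam : ∀ i, IsSteinbergCocycle ((Pi.mulSingle k c : Fin n → Fˣ → Fˣ → G) i) := fun i => by
    rcases eq_or_ne i k with rfl | hi
    · simpa using hc
    · simpa [hi] using IsSteinbergCocycle.one
  refine ⟨hfam, fun i j hij u v => ?_, fun i j hij t u v => ?_, fun i j hij t u v => ?_⟩
  · rcases eq_or_ne i k with rfl | hi
    · simp [(hsq' j hij.symm u v).2, hij.symm]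
    rcases eq_or_ne j k with rfl | hj
    · simp [(hsq' i hi u v).1, hi]
    · simp [hi, hj]
  · rcases eq_or_ne i k with rfl | hi
    · simp [fun x => (hsq' j hij.symm x v).2]
    · simp [hi]
  · rcases eq_or_ne i k with rfl | hi
    · simp [fun y => (hsq' j hij.symm t y).1]
    · simp [hi]

end Families

namespace K2A

variable {n : ℕ} {A : Matrix (Fin n) (Fin n) ℤ} {m k l : Fin n}

theorem c_sq_left_of_isStarCartan (hA : IsStarCartan A m) (hk : k ≠ m) (u v : Fˣ) :
    K2A.c F A k (u ^ 2) v = K2A.c F A m u v := by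
  have h := K2A.c_zpow_right A hk u⁻¹ v
  rw [hA.center_row k hk, hA.center_col k hk, zpow_neg, zpow_neg_one, inv_inv, zpow_ofNat,
    ← (K2A.isSteinbergCocycle_c A k).eq_inv_inv] at h
  rw [(K2A.isSteinbergCocycle_c A k).sq_left, h]

theorem c_div_c_sq_left_of_isStarCartan (hA : IsStarCartan A m) (hk : k ≠ m) (hl : l ≠ m)
    (u v : Fˣ) :
    K2A.c F A k (u ^ 2) v / K2A.c F A l (u ^ 2) v = 1 := by
  rw [c_sq_left_of_isStarCartan hA hk, c_sq_left_of_isStarCartan hA hl, div_self']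

end K2A

abbrev cartan156 : Matrix (Fin 4) (Fin 4) ℤ :=
  !![2, 0, 0, -1; 0, 2, 0, -1; 0, 0, 2, -1; -2, -2, -2, 2]

namespace Cartan156

theorem isStarCartan : IsStarCartan cartan156 3 where
  center_row := by decide
  center_col := by decide
  eq_zero i j := by fin_cases i <;> fin_cases j <;> decide

variable (F)

noncomputable def toProd :
    K2A F cartan156 →* K2SL F × (K2SL F ⧸ K2SL.sqSubgroup F 1) × (K2SL F ⧸ K2SL.sqSubgroup F 1) :=
  (K2A.lift (isCocycleFamily_starFamily isStarCartan (K2SL.isSteinbergCocycle_sym F))).prod <|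
    (K2A.lift (isCocycleFamily_mulSingle (isStarCartan.even (k := 1) (by decide))
      (K2SL.isSteinbergCocycle_mk_sym F) K2SL.mk_sym_sq_left)).prod
    (K2A.lift (isCocycleFamily_mulSingle (isStarCartan.even (k := 2) (by decide))
      (K2SL.isSteinbergCocycle_mk_sym F) K2SL.mk_sym_sq_left))

noncomputable def ofQuot (k : Fin 4) (hk : k ≠ 3) :
    K2SL F ⧸ K2SL.sqSubgroup F 1 →* K2A F cartan156 :=
  K2SL.liftSq ((K2A.isSteinbergCocycle_c _ k).div (K2A.isSteinbergCocycle_c _ 0))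
    (K2A.c_div_c_sq_left_of_isStarCartan isStarCartan hk (by decide))

noncomputable def ofProd :
    K2SL F × (K2SL F ⧸ K2SL.sqSubgroup F 1) × (K2SL F ⧸ K2SL.sqSubgroup F 1) →* K2A F cartan156 :=
  (K2SL.lift (K2A.isSteinbergCocycle_c _ 0)).coprod
    ((ofQuot F 1 (by decide)).coprod (ofQuot F 2 (by decide)))

theorem ofProd_comp_toProd : (ofProd F).comp (toProd F) = MonoidHom.id _ := by
  refine K2A.hom_ext fun i u v => ?_
  have hcenter : K2A.c F cartan156 0 u (v ^ 2) = K2A.c F cartan156 3 u v := by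
    rw [← (K2A.isSteinbergCocycle_c _ 0).sq_left,
      K2A.c_sq_left_of_isStarCartan isStarCartan (by decide)]
  fin_cases i <;> simp [toProd, ofProd, ofQuot, hcenter]

theorem toProd_comp_ofProd : (toProd F).comp (ofProd F) = MonoidHom.id _ := by
  have h₁ : (toProd F).comp (K2SL.lift (K2A.isSteinbergCocycle_c _ 0)) = MonoidHom.inl _ _ :=
    K2SL.hom_ext fun u v => by simp [toProd]
  have h₂ :
      (toProd F).comp (ofQuot F 1 (by decide)) = (MonoidHom.inr _ _).comp (MonoidHom.inl _ _) :=
    QuotientGroup.monoidHom_ext _ (K2SL.hom_ext fun u v => by simp [toProd, ofQuot])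
  have h₃ :
      (toProd F).comp (ofQuot F 2 (by decide)) = (MonoidHom.inr _ _).comp (MonoidHom.inr _ _) :=
    QuotientGroup.monoidHom_ext _ (K2SL.hom_ext fun u v => by simp [toProd, ofQuot])
  rw [ofProd, MonoidHom.comp_coprod, MonoidHom.comp_coprod, h₁, h₂, h₃, ← MonoidHom.comp_coprod,
    MonoidHom.coprod_inl_inr, MonoidHom.comp_id, MonoidHom.coprod_inl_inr]

end Cartan156

/-- For the GCM with rows `(2,0,0,-1)`, `(0,2,0,-1)`, `(0,0,2,-1)`, `(-2,-2,-2,2)` (No. 156),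
`K₂(A,F) ≅ K₂(2,F) × (K₂(2,F)/⟨{u²,v}⟩) × (K₂(2,F)/⟨{u²,v}⟩)`. -/
theorem K2A_rank4_no156 (F : Type) [Field F] :
    Nonempty (K2A F !![2, 0, 0, -1; 0, 2, 0, -1; 0, 0, 2, -1; -2, -2, -2, 2] ≃*
      (K2SL F × (K2SL F ⧸ K2SL.sqSubgroup F 1) × (K2SL F ⧸ K2SL.sqSubgroup F 1))) :=
  ⟨MonoidHom.toMulEquiv (Cartan156.toProd F) (Cartan156.ofProd F)
    (Cartan156.ofProd_comp_toProd F) (Cartan156.toProd_comp_ofProd F)⟩
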